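/- arXiv:2212.03117 — 2 statements merged into one kernel-verified Lean document; each statement's English description precedes it below -/
import Mathlib

section
/- Standard soft policy improvement in a finite entropy-regularized MDP: if π_{k+1}(·|s) is the softmax policy proportional to exp(Q^{π_k}(s,·)/α) for every state s, then Q^{π_{k+1}}(s,a) ≥ Q^{π_k}(s,a) for all (s,a). -/
open Real

lemma wsum_ge_aux {ι : Type*} [Fintype ι] (w f : ι → ℝ) (hw : ∀ i, 0 ≤ w i)
    (hs : ∑ i, w i = 1) (m : ℝ) (hm : ∀ i, m ≤ f i) : m ≤ ∑ i, w i * f i := by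
  calc m = ∑ i, w i * m := by rw [← Finset.sum_mul, hs, one_mul]
  _ ≤ ∑ i, w i * f i :=
    Finset.sum_le_sum fun i _ => mul_le_mul_of_nonneg_left (hm i) (hw i)

lemma gibbs_aux {A : Type*} [Fintype A] [Nonempty A] (p q : A → ℝ) (hp : ∀ a, 0 < p a)
    (hs : ∑ a, p a = 1) :
    ∑ a, p a * (q a - Real.log (p a)) ≤ Real.log (∑ a, Real.exp (q a)) := by
  set Z := ∑ a, Real.exp (q a) with hZ
  have hZpos : 0 < Z := Finset.sum_pos (fun a _ => Real.exp_pos _) Finset.univ_nonempty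
  have key : ∀ a : A, p a * (q a - Real.log (p a) - Real.log Z)
      ≤ Real.exp (q a) / Z - p a := by
    intro a
    have hpa := hp a
    have hu : 0 < Real.exp (q a) / (p a * Z) := by positivity
    have hlog : Real.log (Real.exp (q a) / (p a * Z)) ≤ Real.exp (q a) / (p a * Z) - 1 :=
      Real.log_le_sub_one_of_pos hu
    have hlogeq : Real.log (Real.exp (q a) / (p a * Z))
        = q a - Real.log (p a) - Real.log Z := by
      rw [Real.log_div (Real.exp_ne_zero _) (by positivity), Real.log_exp,
        Real.log_mul (ne_of_gt (hp a)) (ne_of_gt hZpos)]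
      ring
    have h := mul_le_mul_of_nonneg_left hlog (le_of_lt (hp a))
    rw [hlogeq] at h
    calc p a * (q a - Real.log (p a) - Real.log Z)
        ≤ p a * (Real.exp (q a) / (p a * Z) - 1) := h
      _ = Real.exp (q a) / Z - p a := by field_simp
  have hsum : ∑ a, p a * (q a - Real.log (p a) - Real.log Z)
      ≤ ∑ a, (Real.exp (q a) / Z - p a) := Finset.sum_le_sum fun a _ => key a
  have h1 : ∑ a, (Real.exp (q a) / Z - p a) = 0 := by
    rw [Finset.sum_sub_distrib, ← Finset.sum_div, hs, ← hZ, div_self (ne_of_gt hZpos)]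
    ring
  have h2 : ∑ a, p a * (q a - Real.log (p a) - Real.log Z)
      = (∑ a, p a * (q a - Real.log (p a))) - Real.log Z := by
    rw [Finset.sum_congr rfl (fun a _ => by
      show p a * (q a - Real.log (p a) - Real.log Z)
          = p a * (q a - Real.log (p a)) - p a * Real.log Z
      ring), Finset.sum_sub_distrib, ← Finset.sum_mul, hs, one_mul]
  linarith

/-- Standard soft policy improvement in a finite entropy-regularized MDP: updating to the
softmax of the current soft Q-function does not decrease the soft Q-function. -/
theorem q_pensieve_stmt_6 {S A : Type*} [Fintype S] [Fintype A] [Nonempty S] [Nonempty A]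
    (P : S → A → S → ℝ) (hPnn : ∀ s a s', 0 ≤ P s a s') (hPsum : ∀ s a, ∑ s', P s a s' = 1)
    (γ α rmax : ℝ) (hγ0 : 0 < γ) (hγ1 : γ < 1) (hα : 0 < α)
    (r : S → A → ℝ) (hr : ∀ s a, |r s a| ≤ rmax)
    (polk : S → A → ℝ) (hpolkpos : ∀ s a, 0 < polk s a) (hpolksum : ∀ s, ∑ a, polk s a = 1)
    (Qk : S → A → ℝ)
    (hQk : ∀ s a, Qk s a = r s a + γ * ∑ s', P s a s' *
        ∑ a', polk s' a' * (Qk s' a' - α * Real.log (polk s' a')))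
    (polk1 : S → A → ℝ)
    (hpolk1 : ∀ s a, polk1 s a = Real.exp (Qk s a / α) / ∑ a', Real.exp (Qk s a' / α))
    (Qk1 : S → A → ℝ)
    (hQk1 : ∀ s a, Qk1 s a = r s a + γ * ∑ s', P s a s' *
        ∑ a', polk1 s' a' * (Qk1 s' a' - α * Real.log (polk1 s' a'))) :
    ∀ s a, Qk s a ≤ Qk1 s a := by
  have hα' : α ≠ 0 := ne_of_gt hα
  have hZpos : ∀ s : S, 0 < ∑ a', Real.exp (Qk s a' / α) :=
    fun s => Finset.sum_pos (fun a _ => Real.exp_pos _) Finset.univ_nonempty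
  have hpolk1pos : ∀ s a, 0 < polk1 s a := by
    intro s a; rw [hpolk1]; exact div_pos (Real.exp_pos _) (hZpos s)
  have hpolk1sum : ∀ s, ∑ a, polk1 s a = 1 := by
    intro s
    simp only [hpolk1]
    rw [← Finset.sum_div, div_self (ne_of_gt (hZpos s))]
  have hlogpolk1 : ∀ s a, Real.log (polk1 s a)
      = Qk s a / α - Real.log (∑ a', Real.exp (Qk s a' / α)) := by
    intro s a
    rw [hpolk1, Real.log_div (Real.exp_ne_zero _) (ne_of_gt (hZpos s)), Real.log_exp]
  -- old value function is at most α log Z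
  have hVk_le : ∀ s, ∑ a, polk s a * (Qk s a - α * Real.log (polk s a))
      ≤ α * Real.log (∑ a', Real.exp (Qk s a' / α)) := by
    intro s
    have hg := gibbs_aux (polk s) (fun a => Qk s a / α) (hpolkpos s) (hpolksum s)
    have h : ∑ a, polk s a * (Qk s a - α * Real.log (polk s a))
        = α * ∑ a, polk s a * (Qk s a / α - Real.log (polk s a)) := by
      rw [Finset.mul_sum]
      refine Finset.sum_congr rfl fun a _ => ?_
      field_simp
    rw [h]
    exact mul_le_mul_of_nonneg_left hg (le_of_lt hα)
  -- softmax attains α log Z against Qk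
  have hV1eq : ∀ s, ∑ a, polk1 s a * (Qk s a - α * Real.log (polk1 s a))
      = α * Real.log (∑ a', Real.exp (Qk s a' / α)) := by
    intro s
    have hterm : ∀ a : A, polk1 s a * (Qk s a - α * Real.log (polk1 s a))
        = polk1 s a * (α * Real.log (∑ a', Real.exp (Qk s a' / α))) := by
      intro a
      rw [hlogpolk1]
      field_simp
      ring
    rw [Finset.sum_congr rfl (fun a _ => hterm a), ← Finset.sum_mul, hpolk1sum, one_mul]
  -- contraction argument on the minimum of Qk1 - Qk
  set g : S × A → ℝ := fun p => Qk1 p.1 p.2 - Qk p.1 p.2 with hgdef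
  obtain ⟨p0, -, hp0⟩ := Finset.exists_min_image Finset.univ g Finset.univ_nonempty
  set m := g p0 with hmdef
  have hm_le : ∀ s a, m ≤ g (s, a) := fun s a => hp0 (s, a) (Finset.mem_univ _)
  set V1 : S → ℝ := fun s' => ∑ a', polk1 s' a' * (Qk1 s' a' - α * Real.log (polk1 s' a'))
    with hV1def
  set V0 : S → ℝ := fun s' => ∑ a', polk s' a' * (Qk s' a' - α * Real.log (polk s' a'))
    with hV0def
  have hVs : ∀ s', m + V0 s' ≤ V1 s' := by
    intro s'
    have hsplit : V1 s' = (∑ a', polk1 s' a' * g (s', a'))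
        + ∑ a', polk1 s' a' * (Qk s' a' - α * Real.log (polk1 s' a')) := by
      rw [hV1def, ← Finset.sum_add_distrib]
      refine Finset.sum_congr rfl fun a' _ => ?_
      simp only [hgdef]
      ring
    have h1 : m ≤ ∑ a', polk1 s' a' * g (s', a') :=
      wsum_ge_aux _ _ (fun a' => (hpolk1pos s' a').le) (hpolk1sum s') m (fun a' => hm_le s' a')
    have h2 : V0 s' ≤ ∑ a', polk1 s' a' * (Qk s' a' - α * Real.log (polk1 s' a')) := by
      rw [hV1eq s']
      exact hVk_le s'
    linarith
  have key : ∀ s a, γ * m ≤ g (s, a) := by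
    intro s a
    have hgval : g (s, a) = γ * ∑ s', P s a s' * (V1 s' - V0 s') := by
      have hsd : ∑ s', P s a s' * (V1 s' - V0 s')
          = (∑ s', P s a s' * V1 s') - ∑ s', P s a s' * V0 s' := by
        rw [← Finset.sum_sub_distrib]
        exact Finset.sum_congr rfl fun _ _ => by ring
      simp only [hgdef]
      rw [hQk1 s a, hQk s a, hsd]
      ring
    have hsum : m ≤ ∑ s', P s a s' * (V1 s' - V0 s') :=
      wsum_ge_aux _ _ (fun s' => hPnn s a s') (hPsum s a) m (fun s' => by linarith [hVs s'])
    rw [hgval]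
    exact mul_le_mul_of_nonneg_left hsum (le_of_lt hγ0)
  have hmm : γ * m ≤ m := by
    have := key p0.1 p0.2
    simpa using this
  have hm0 : 0 ≤ m := by nlinarith
  intro s a
  have := hm_le s a
  simp only [hgdef] at this
  linarith
end

section
/- Optimality of the limit policy in soft policy iteration: in a finite entropy-regularized MDP, suppose π* is a full-support policy that is a fixed point of the soft policy improvement map, i.e., π*(·|s) = softmax(Q^{π*}(s,·)/α) for every s. Then Q^{π*}(s,a) ≥ Q^{π}(s,a) for every policy π and every (s,a). -/
open Real

/-- Optimality of a fixed point of the soft policy improvement map: if π* is the softmax of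
its own soft Q-function, then its soft Q-function dominates that of every policy. -/
theorem q_pensieve_stmt_13 {S A : Type*} [Fintype S] [Fintype A] [Nonempty S] [Nonempty A]
    (P : S → A → S → ℝ) (hPnn : ∀ s a s', 0 ≤ P s a s') (hPsum : ∀ s a, ∑ s', P s a s' = 1)
    (γ α rmax : ℝ) (hγ0 : 0 < γ) (hγ1 : γ < 1) (hα : 0 < α)
    (r : S → A → ℝ) (hr : ∀ s a, |r s a| ≤ rmax)
    (pstar : S → A → ℝ) (hpstarpos : ∀ s a, 0 < pstar s a)
    (hpstarsum : ∀ s, ∑ a, pstar s a = 1)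
    (Qstar : S → A → ℝ)
    (hQstar : ∀ s a, Qstar s a = r s a + γ * ∑ s', P s a s' *
        ∑ a', pstar s' a' * (Qstar s' a' - α * Real.log (pstar s' a')))
    (hsoftmax : ∀ s a, pstar s a = Real.exp (Qstar s a / α) / ∑ a', Real.exp (Qstar s a' / α)) :
    ∀ pol : S → A → ℝ, (∀ s a, 0 ≤ pol s a) → (∀ s, ∑ a, pol s a = 1) →
      ∀ Qpi : S → A → ℝ,
        (∀ s a, Qpi s a = r s a + γ * ∑ s', P s a s' *
            ∑ a', pol s' a' * (Qpi s' a' - α * Real.log (pol s' a'))) →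
        ∀ s a, Qpi s a ≤ Qstar s a := by
  intro pol hpolnn hpolsum Qpi hQpi
  set Z : S → ℝ := fun s => ∑ a', Real.exp (Qstar s a' / α) with hZ
  have hZpos : ∀ s, 0 < Z s := fun s =>
    Finset.sum_pos (fun a _ => Real.exp_pos _) Finset.univ_nonempty
  have hlogpstar : ∀ s a, Real.log (pstar s a) = Qstar s a / α - Real.log (Z s) := by
    intro s a
    rw [hsoftmax s a]
    rw [Real.log_div (Real.exp_pos _).ne' (hZpos s).ne', Real.log_exp]
  -- value of pstar
  have hVstar : ∀ s, ∑ a', pstar s a' * (Qstar s a' - α * Real.log (pstar s a'))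
      = α * Real.log (Z s) := by
    intro s
    have hconst : ∀ a', Qstar s a' - α * Real.log (pstar s a') = α * Real.log (Z s) := by
      intro a'
      rw [hlogpstar]
      field_simp
      ring
    simp_rw [hconst]
    rw [← Finset.sum_mul, hpstarsum, one_mul]
  -- Gibbs variational inequality
  have key : ∀ s, ∑ a', pol s a' * (Qstar s a' - α * Real.log (pol s a'))
      ≤ α * Real.log (Z s) := by
    intro s
    have h2 : ∀ a' : A, pol s a' * (Real.log (pstar s a') - Real.log (pol s a'))
        ≤ pstar s a' - pol s a' := by
      intro a'
      rcases eq_or_lt_of_le (hpolnn s a') with h | h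
      · rw [← h]; simpa using (hpstarpos s a').le
      · have hx : 0 < pstar s a' / pol s a' := div_pos (hpstarpos s a') h
        have hlog := Real.log_le_sub_one_of_pos hx
        rw [Real.log_div (hpstarpos s a').ne' h.ne'] at hlog
        calc pol s a' * (Real.log (pstar s a') - Real.log (pol s a'))
            ≤ pol s a' * (pstar s a' / pol s a' - 1) :=
              mul_le_mul_of_nonneg_left hlog h.le
          _ = pstar s a' - pol s a' := by field_simp
    have h3 : ∑ a', (pol s a' * (Qstar s a' - α * Real.log (pol s a'))
        - pol s a' * (α * Real.log (Z s))) ≤ 0 := by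
      have heq : ∀ a' : A, pol s a' * (Qstar s a' - α * Real.log (pol s a'))
          - pol s a' * (α * Real.log (Z s))
          = α * (pol s a' * (Real.log (pstar s a') - Real.log (pol s a'))) := by
        intro a'
        rw [hlogpstar]
        field_simp
        ring
      calc ∑ a', (pol s a' * (Qstar s a' - α * Real.log (pol s a'))
            - pol s a' * (α * Real.log (Z s)))
          = ∑ a', α * (pol s a' * (Real.log (pstar s a') - Real.log (pol s a'))) := by
            exact Finset.sum_congr rfl (fun a' _ => heq a')
        _ ≤ ∑ a', α * (pstar s a' - pol s a') :=
            Finset.sum_le_sum (fun a' _ => mul_le_mul_of_nonneg_left (h2 a') hα.le)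
        _ = α * (∑ a', pstar s a' - ∑ a', pol s a') := by
            rw [← Finset.mul_sum, Finset.sum_sub_distrib]
        _ = 0 := by rw [hpstarsum, hpolsum]; ring
    have h4 : ∑ a', pol s a' * (α * Real.log (Z s)) = α * Real.log (Z s) := by
      rw [← Finset.sum_mul, hpolsum, one_mul]
    have := Finset.sum_sub_distrib (f := fun a' => pol s a' * (Qstar s a' - α * Real.log (pol s a')))
      (g := fun a' => pol s a' * (α * Real.log (Z s))) (s := Finset.univ)
    rw [this, h4] at h3
    linarith
  -- max gap
  have hne : (Finset.univ : Finset (S × A)).Nonempty := Finset.univ_nonempty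
  set f : S × A → ℝ := fun p => Qpi p.1 p.2 - Qstar p.1 p.2 with hf
  set M : ℝ := Finset.univ.sup' hne f with hMdef
  have hM : ∀ s a, Qpi s a - Qstar s a ≤ M := fun s a =>
    Finset.le_sup' f (Finset.mem_univ (s, a))
  obtain ⟨p, -, hp⟩ := Finset.exists_mem_eq_sup' hne f
  -- value gap bound
  have hVgap : ∀ s, ∑ a', pol s a' * (Qpi s a' - α * Real.log (pol s a'))
      - ∑ a', pstar s a' * (Qstar s a' - α * Real.log (pstar s a')) ≤ M := by
    intro s
    have h1 : ∑ a', pol s a' * (Qpi s a' - α * Real.log (pol s a'))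
        ≤ ∑ a', pol s a' * (Qstar s a' - α * Real.log (pol s a')) + M := by
      have : ∑ a', pol s a' * (Qpi s a' - α * Real.log (pol s a'))
          ≤ ∑ a', (pol s a' * (Qstar s a' - α * Real.log (pol s a')) + pol s a' * M) := by
        apply Finset.sum_le_sum
        intro a' _
        have := hM s a'
        nlinarith [hpolnn s a']
      rw [Finset.sum_add_distrib, ← Finset.sum_mul, hpolsum, one_mul] at this
      exact this
    have := key s
    rw [hVstar s]
    linarith
  -- M ≤ γ M
  have hMle : M ≤ γ * M := by
    have hpM : M = f p := hMdef.trans hp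
    rw [show M = f p from hpM]
    nth_rewrite 2 [← hpM]
    have heq : f p = γ * ∑ s', P p.1 p.2 s' *
        ((∑ a', pol s' a' * (Qpi s' a' - α * Real.log (pol s' a')))
        - ∑ a', pstar s' a' * (Qstar s' a' - α * Real.log (pstar s' a'))) := by
      calc f p = γ * ((∑ s', P p.1 p.2 s' *
              ∑ a', pol s' a' * (Qpi s' a' - α * Real.log (pol s' a')))
            - ∑ s', P p.1 p.2 s' *
              ∑ a', pstar s' a' * (Qstar s' a' - α * Real.log (pstar s' a'))) := by
            rw [hf]; simp only; rw [hQpi p.1 p.2, hQstar p.1 p.2]; ring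
        _ = _ := by
            congr 1
            rw [← Finset.sum_sub_distrib]
            exact Finset.sum_congr rfl fun s' _ => (mul_sub _ _ _).symm
    rw [heq]
    apply mul_le_mul_of_nonneg_left _ hγ0.le
    calc ∑ s', P p.1 p.2 s' *
          ((∑ a', pol s' a' * (Qpi s' a' - α * Real.log (pol s' a')))
          - ∑ a', pstar s' a' * (Qstar s' a' - α * Real.log (pstar s' a')))
        ≤ ∑ s', P p.1 p.2 s' * M :=
          Finset.sum_le_sum (fun s' _ =>
            mul_le_mul_of_nonneg_left (hVgap s') (hPnn p.1 p.2 s'))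
      _ = M := by rw [← Finset.sum_mul, hPsum, one_mul]
  have hM0 : M ≤ 0 := by nlinarith
  intro s a
  have := hM s a
  linarith
end
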